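/- arXiv:1612.06567 — 2 statements merged into one kernel-verified Lean document; each statement's English description precedes it below -/
import Mathlib

section
/- Let Σ = {(z, w) ∈ ℂ² : writing w = u + iv and z = x + iy, one has v = 0 and u² = x² + y²}. Then Σ ∖ {(0,0)} is a smooth 2-dimensional totally real submanifold of ℂ²; in particular, at every point p ∈ Σ with p ≠ (0,0), the tangent space T_pΣ contains no complex line. -/
noncomputable def dF (p : ℂ × ℂ) : (ℂ × ℂ) →L[ℝ] ℝ × ℝ :=
  (Complex.imCLM.comp (ContinuousLinearMap.snd ℝ ℂ ℂ)).prod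
  (((2 * p.2.re) • (Complex.reCLM.comp (ContinuousLinearMap.snd ℝ ℂ ℂ))) -
   ((2 * p.1.re) • (Complex.reCLM.comp (ContinuousLinearMap.fst ℝ ℂ ℂ))) -
   ((2 * p.1.im) • (Complex.imCLM.comp (ContinuousLinearMap.fst ℝ ℂ ℂ))))

lemma dF_apply (p v : ℂ × ℂ) :
    dF p v = (v.2.im, 2 * p.2.re * v.2.re - 2 * p.1.re * v.1.re - 2 * p.1.im * v.1.im) := by
  simp [dF, mul_comm]

lemma hasFDerivAt_F (p : ℂ × ℂ) :
    HasFDerivAt (fun p : ℂ × ℂ => ((p.2.im, p.2.re ^ 2 - p.1.re ^ 2 - p.1.im ^ 2) : ℝ × ℝ))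
      (dF p) p := by
  have h1 : HasFDerivAt (fun p : ℂ × ℂ => p.2.im)
      (Complex.imCLM.comp (ContinuousLinearMap.snd ℝ ℂ ℂ)) p :=
    (Complex.imCLM.comp (ContinuousLinearMap.snd ℝ ℂ ℂ)).hasFDerivAt
  have h2 : HasFDerivAt (fun p : ℂ × ℂ => p.2.re)
      (Complex.reCLM.comp (ContinuousLinearMap.snd ℝ ℂ ℂ)) p :=
    (Complex.reCLM.comp (ContinuousLinearMap.snd ℝ ℂ ℂ)).hasFDerivAt
  have h3 : HasFDerivAt (fun p : ℂ × ℂ => p.1.re)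
      (Complex.reCLM.comp (ContinuousLinearMap.fst ℝ ℂ ℂ)) p :=
    (Complex.reCLM.comp (ContinuousLinearMap.fst ℝ ℂ ℂ)).hasFDerivAt
  have h4 : HasFDerivAt (fun p : ℂ × ℂ => p.1.im)
      (Complex.imCLM.comp (ContinuousLinearMap.fst ℝ ℂ ℂ)) p :=
    (Complex.imCLM.comp (ContinuousLinearMap.fst ℝ ℂ ℂ)).hasFDerivAt
  have h := h1.prodMk (((h2.mul h2).sub (h3.mul h3)).sub (h4.mul h4))
  simp only [pow_two]
  refine (h.congr_fderiv ?_).congr_of_eventuallyEq (Filter.Eventually.of_forall fun x => ?_)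
  · ext v <;> simp [dF] <;> ring
  · rfl

/-- Let `Σ = {(z,w) : Im w = 0 ∧ (Re w)² = (Re z)² + (Im z)²}` be the zero set of
`F(z,w) = (Im w, (Re w)² - (Re z)² - (Im z)²)`. Away from the origin, `F` is a
submersion (so `Σ ∖ {0}` is a smooth 2-dimensional submanifold of `ℂ² ≅ ℝ⁴`) and
the tangent space `ker (dF_p)` contains no complex line: for every nonzero tangent
vector `v`, the vector `i·v` is not tangent. -/
theorem sigma_is_totally_real
    (F : ℂ × ℂ → ℝ × ℝ)
    (hF : ∀ p : ℂ × ℂ,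
      F p = (p.2.im, p.2.re ^ 2 - p.1.re ^ 2 - p.1.im ^ 2)) :
    ∀ p : ℂ × ℂ, F p = 0 → p ≠ 0 →
      Function.Surjective (fderiv ℝ F p) ∧
      Module.finrank ℝ (LinearMap.ker ((fderiv ℝ F p) : (ℂ × ℂ) →ₗ[ℝ] ℝ × ℝ)) = 2 ∧
      ∀ v : ℂ × ℂ, fderiv ℝ F p v = 0 → v ≠ 0 →
        ¬ fderiv ℝ F p (Complex.I • v) = 0 := by
  have hFe : F = fun p : ℂ × ℂ => ((p.2.im, p.2.re ^ 2 - p.1.re ^ 2 - p.1.im ^ 2) : ℝ × ℝ) :=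
    funext hF
  subst hFe
  intro p hp hp0
  have hder : fderiv ℝ (fun p : ℂ × ℂ =>
      ((p.2.im, p.2.re ^ 2 - p.1.re ^ 2 - p.1.im ^ 2) : ℝ × ℝ)) p = dF p :=
    (hasFDerivAt_F p).fderiv
  rw [hder]
  have him : p.2.im = 0 := congrArg Prod.fst hp
  have heq : p.2.re ^ 2 = p.1.re ^ 2 + p.1.im ^ 2 := by
    have := congrArg Prod.snd hp
    simp at this; linarith
  have hw : p.2.re ≠ 0 := by
    intro h
    apply hp0
    have hz1 : p.1.re = 0 ∧ p.1.im = 0 := by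
      constructor <;> nlinarith [sq_nonneg p.1.re, sq_nonneg p.1.im]
    exact Prod.ext (Complex.ext hz1.1 hz1.2) (Complex.ext h him)
  have hsurj : Function.Surjective (dF p) := by
    intro ab
    refine ⟨(0, Complex.mk (ab.2 / (2 * p.2.re)) ab.1), ?_⟩
    rw [dF_apply]
    have h2 : (2 : ℝ) * p.2.re ≠ 0 := by
      simpa using hw
    simp only [Prod.fst_zero, Complex.zero_re, Complex.zero_im, mul_zero, sub_zero]
    refine Prod.ext rfl ?_
    show 2 * p.2.re * (ab.2 / (2 * p.2.re)) = ab.2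
    field_simp
  refine ⟨hsurj, ?_, ?_⟩
  · have hrank := LinearMap.finrank_range_add_finrank_ker ((dF p) : (ℂ × ℂ) →ₗ[ℝ] ℝ × ℝ)
    have hr : LinearMap.range ((dF p) : (ℂ × ℂ) →ₗ[ℝ] ℝ × ℝ) = ⊤ :=
      LinearMap.range_eq_top.mpr hsurj
    rw [hr] at hrank
    simp [finrank_top] at hrank
    omega
  · intro v hv hv0 hiv
    rw [dF_apply] at hv hiv
    have h1 := congrArg Prod.fst hv
    have h2 := congrArg Prod.snd hv
    have h3 := congrArg Prod.fst hiv
    have h4 := congrArg Prod.snd hiv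
    simp [Complex.mul_re, Complex.mul_im] at h1 h2 h3 h4
    apply hv0
    have hv2 : v.2 = 0 := Complex.ext h3 h1
    have hz : p.1.re ^ 2 + p.1.im ^ 2 ≠ 0 := by
      rw [← heq]; positivity
    have eA : p.1.re * v.1.re + p.1.im * v.1.im = 0 := by
      linear_combination (-1/2 : ℝ) * h2 + p.2.re * h3
    have eB : p.1.re * v.1.im - p.1.im * v.1.re = 0 := by
      linear_combination (1/2 : ℝ) * h4 + p.2.re * h1
    have e1 : (p.1.re ^ 2 + p.1.im ^ 2) * v.1.re = 0 := by
      linear_combination p.1.re * eA - p.1.im * eB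
    have e2 : (p.1.re ^ 2 + p.1.im ^ 2) * v.1.im = 0 := by
      linear_combination p.1.im * eA + p.1.re * eB
    have hvr : v.1.re = 0 := (mul_eq_zero.mp e1).resolve_left hz
    have hvi : v.1.im = 0 := (mul_eq_zero.mp e2).resolve_left hz
    exact Prod.ext (Complex.ext hvr hvi) hv2
end

section
/- Let T₊ be holomorphic and injective on the upper half-disc H⁺ = {w ∈ B(0, ρ) : Im w > 0}, extending continuously to the interval I = (-ρ, ρ), with |T₊(x)| = |x| for all x ∈ I. Suppose S is continuous on the closure of T₊(H⁺), holomorphic on T₊(H⁺), with S(ζ) = conj(ζ) for all ζ in the cluster set of I under T₊. Define T₋(w) = conj(S(T₊(conj(w)))) for w in the lower half-disc H⁻. Then T₋ extends continuously to I with T₋(x) = T₊(x) for all x ∈ I, and hence the function equal to T₊ on H⁺ and T₋ on H⁻ extends holomorphically to B(0, ρ). -/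
open ComplexConjugate Complex Set Metric intervalIntegral
open scoped Interval

lemma hasDerivAt_conj_conj {g : ℂ → ℂ} {d z : ℂ} (h : HasDerivAt g d (conj z)) :
    HasDerivAt (fun w => conj (g (conj w))) (conj d) z := by
  rw [hasDerivAt_iff_isLittleO] at h ⊢
  have h2 := h.comp_tendsto ((Complex.continuous_conj.tendsto z))
  rw [Asymptotics.isLittleO_iff] at h2 ⊢
  intro c hc
  filter_upwards [h2 hc] with w hw
  have e1 : (fun w => conj (g (conj w))) w - (fun w => conj (g (conj w))) z - (w - z) • conj d
      = conj ((g ∘ conj) w - (g ∘ conj) z - (conj w - conj z) • d) := by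
    simp only [Function.comp, smul_eq_mul, map_sub, map_mul, Complex.conj_conj]
  rw [e1]
  have e2 : ‖conj ((g ∘ conj) w - (g ∘ conj) z - (conj w - conj z) • d)‖
      = ‖(g ∘ conj) w - (g ∘ conj) z - (conj w - conj z) • d‖ := by
    rw [Complex.norm_conj]
  have e3 : ‖w - z‖ = ‖conj w - conj z‖ := by
    rw [← map_sub, Complex.norm_conj]
  rw [e2, e3]
  simpa [Function.comp] using hw

lemma rect_subset_ball {c : ℂ} {r x₁ x₂ y₁ y₂ : ℝ} (hc : c.im = 0)
    (h₁ : |x₁ - c.re| < r) (h₂ : |x₂ - c.re| < r) (h₃ : |y₁| < r) (h₄ : |y₂| < r) :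
    ([[x₁, x₂]] ×ℂ [[y₁, y₂]]) ⊆ ball c (2 * r) := by
  intro p hp
  rw [Complex.mem_reProdIm] at hp
  obtain ⟨hre, him⟩ := hp
  rw [Set.mem_uIcc] at hre him
  rw [mem_ball, Complex.dist_eq]
  have hre' : |p.re - c.re| < r := by
    rw [abs_lt] at h₁ h₂ ⊢
    rcases hre with ⟨h, h'⟩ | ⟨h, h'⟩ <;> constructor <;> linarith [h₁.1, h₁.2, h₂.1, h₂.2]
  have him' : |p.im - c.im| < r := by
    rw [hc, sub_zero]
    rw [abs_lt] at h₃ h₄ ⊢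
    rcases him with ⟨h, h'⟩ | ⟨h, h'⟩ <;> constructor <;> linarith
  calc ‖p - c‖ ≤ |(p - c).re| + |(p - c).im| := Complex.norm_le_abs_re_add_abs_im _
    _ = |p.re - c.re| + |p.im - c.im| := by simp [Complex.sub_re, Complex.sub_im]
    _ < 2 * r := by linarith

lemma morera_line {f : ℂ → ℂ} {U : Set ℂ} (hU : IsOpen U) (hc : ContinuousOn f U)
    (hd : ∀ z ∈ U, z.im ≠ 0 → DifferentiableAt ℂ f z) : DifferentiableOn ℂ f U := by
  -- rectangle integrals with an edge on the real axis vanish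
  have key0 : ∀ x₁ x₂ y₁ y₂ : ℝ, ([[x₁, x₂]] ×ℂ [[y₁, y₂]]) ⊆ U →
      (0 : ℝ) ∉ Ioo (min y₁ y₂) (max y₁ y₂) →
      (∫ x : ℝ in x₁..x₂, f (x + y₁ * I)) - (∫ x : ℝ in x₁..x₂, f (x + y₂ * I)) +
        I • (∫ y : ℝ in y₁..y₂, f (x₂ + y * I)) - I • (∫ y : ℝ in y₁..y₂, f (x₁ + y * I)) = 0 := by
    intro x₁ x₂ y₁ y₂ hsub h0
    exact Complex.integral_boundary_rect_eq_zero_of_continuousOn_of_differentiableOn f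
      ⟨x₁, y₁⟩ ⟨x₂, y₂⟩ (hc.mono hsub)
      (fun p hp => (hd p (hsub ⟨Ioo_subset_Icc_self hp.1, Ioo_subset_Icc_self hp.2⟩)
        (fun h => h0 (h ▸ hp.2))).differentiableWithinAt)
  -- membership in unordered intervals gives abs bounds
  have hmem : ∀ {lo hi t : ℝ}, t ∈ [[lo, hi]] → |t| ≤ max |lo| |hi| := by
    intro lo hi t ht
    rw [Set.mem_uIcc] at ht
    rw [abs_le]
    rcases ht with ⟨h1, h2⟩ | ⟨h1, h2⟩ <;> constructor <;>
      linarith [le_abs_self lo, neg_abs_le lo, le_abs_self hi, neg_abs_le hi,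
        le_max_left |lo| |hi|, le_max_right |lo| |hi|]
  have hmem' : ∀ {lo hi t e : ℝ}, t ∈ [[lo, hi]] → |t - e| ≤ max |lo - e| |hi - e| := by
    intro lo hi t e ht
    have : t - e ∈ [[lo - e, hi - e]] := by
      rw [Set.mem_uIcc] at ht ⊢
      rcases ht with ⟨h1, h2⟩ | ⟨h1, h2⟩
      · exact Or.inl ⟨by linarith, by linarith⟩
      · exact Or.inr ⟨by linarith, by linarith⟩
    exact hmem this
  intro c hcU
  rcases eq_or_ne c.im 0 with him | him
  swap
  · exact (hd c hcU him).differentiableWithinAt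
  obtain ⟨ε, hε, hball⟩ := Metric.isOpen_iff.mp hU c hcU
  set r := ε / 2 with hrdef
  have hr0 : (0 : ℝ) < r := by positivity
  have hr2 : ball c (2 * r) ⊆ U := by
    refine subset_trans ?_ hball
    apply Metric.ball_subset_ball
    rw [hrdef]; linarith
  -- membership criteria for the ball of radius 2r
  have hin : ∀ a y : ℝ, |a - c.re| < r → |y| < r → (a : ℂ) + y * I ∈ U := by
    intro a y ha hy
    apply hr2
    rw [mem_ball, Complex.dist_eq]
    calc ‖(a : ℂ) + y * I - c‖ ≤ |((a : ℂ) + y * I - c).re| + |((a : ℂ) + y * I - c).im| :=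
          Complex.norm_le_abs_re_add_abs_im _
      _ = |a - c.re| + |y| := by simp [him]
      _ < 2 * r := by linarith
  -- integrability of f along vertical and horizontal segments
  have hvert : ∀ a y y' : ℝ, |a - c.re| < r → |y| < r → |y'| < r →
      IntervalIntegrable (fun t : ℝ => f ((a : ℂ) + t * I)) MeasureTheory.volume y y' := by
    intro a y y' ha hy hy'
    apply ContinuousOn.intervalIntegrable
    refine hc.comp (Continuous.continuousOn
      (continuous_const.add (Complex.continuous_ofReal.mul continuous_const))) ?_
    intro t ht
    exact hin a t ha (lt_of_le_of_lt (hmem ht) (max_lt hy hy'))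
  have hhor : ∀ a b y : ℝ, |a - c.re| < r → |b - c.re| < r → |y| < r →
      IntervalIntegrable (fun t : ℝ => f ((t : ℂ) + y * I)) MeasureTheory.volume a b := by
    intro a b y ha hb hy
    apply ContinuousOn.intervalIntegrable
    refine hc.comp (Continuous.continuousOn
      (Complex.continuous_ofReal.add continuous_const)) ?_
    intro t ht
    exact hin t y (lt_of_le_of_lt (hmem' ht) (max_lt ha hb)) hy
  -- the primitive
  set F : ℂ → ℂ := fun w =>
    (∫ x : ℝ in c.re..w.re, f ((x : ℂ) + (0 : ℝ) * I)) +
      I • ∫ y : ℝ in (0 : ℝ)..w.im, f ((w.re : ℂ) + y * I) with hF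
  have hco : ∀ w ∈ ball c r, |w.re - c.re| < r ∧ |w.im| < r := by
    intro w hw
    rw [mem_ball, Complex.dist_eq] at hw
    constructor
    · calc |w.re - c.re| = |(w - c).re| := by rw [Complex.sub_re]
        _ ≤ ‖w - c‖ := Complex.abs_re_le_norm _
        _ < r := hw
    · calc |w.im| = |(w - c).im| := by rw [Complex.sub_im, him, sub_zero]
        _ ≤ ‖w - c‖ := Complex.abs_im_le_norm _
        _ < r := hw
  have KD : ∀ w ∈ ball c r, HasDerivAt F (f w) w := by
    intro w hw
    obtain ⟨hwre, hwim⟩ := hco w hw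
    rw [hasDerivAt_iff_isLittleO, Asymptotics.isLittleO_iff]
    intro ε' hε'
    have hcw : ContinuousAt f w := by
      refine hc.continuousAt (hU.mem_nhds (hr2 ?_))
      exact Metric.ball_subset_ball (by linarith) hw
    obtain ⟨δ, hδ0, hδ⟩ := Metric.continuousAt_iff.mp hcw (ε' / 2) (by positivity)
    have hwc : dist w c < r := mem_ball.mp hw
    have hη0 : 0 < min (δ / 3) (r - dist w c) := lt_min (by positivity) (by linarith)
    filter_upwards [Metric.ball_mem_nhds w hη0] with z hz
    rw [mem_ball] at hz
    have hzwδ : dist z w < δ / 3 := lt_of_lt_of_le hz (min_le_left _ _)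
    have hzc : z ∈ ball c r := by
      rw [mem_ball]
      calc dist z c ≤ dist z w + dist w c := dist_triangle _ _ _
        _ < r := by have := lt_of_lt_of_le hz (min_le_right _ _); linarith
    obtain ⟨hzre, hzim⟩ := hco z hzc
    -- the two difference integrals
    set D1 : ℂ := ∫ x : ℝ in w.re..z.re, (f ((x : ℂ) + w.im * I) - f w) with hD1
    set D2 : ℂ := ∫ y : ℝ in w.im..z.im, (f ((z.re : ℂ) + y * I) - f w) with hD2
    -- the key algebraic identity
    have hkey : F z - F w - (z - w) • f w = D1 + I • D2 := by
      have S1 : (∫ x : ℝ in c.re..w.re, f ((x : ℂ) + (0 : ℝ) * I)) +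
          (∫ x : ℝ in w.re..z.re, f ((x : ℂ) + (0 : ℝ) * I)) =
          ∫ x : ℝ in c.re..z.re, f ((x : ℂ) + (0 : ℝ) * I) :=
        intervalIntegral.integral_add_adjacent_intervals
          (hhor c.re w.re 0 (by simpa using hr0) hwre (by simpa using hr0))
          (hhor w.re z.re 0 hwre hzre (by simpa using hr0))
      have S2 : (∫ y : ℝ in (0 : ℝ)..w.im, f ((z.re : ℂ) + y * I)) +
          (∫ y : ℝ in w.im..z.im, f ((z.re : ℂ) + y * I)) =
          ∫ y : ℝ in (0 : ℝ)..z.im, f ((z.re : ℂ) + y * I) :=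
        intervalIntegral.integral_add_adjacent_intervals
          (hvert z.re 0 w.im hzre (by simpa using hr0) hwim)
          (hvert z.re w.im z.im hzre hwim hzim)
      have E : (∫ x : ℝ in w.re..z.re, f ((x : ℂ) + (0 : ℝ) * I)) -
          (∫ x : ℝ in w.re..z.re, f ((x : ℂ) + w.im * I)) +
          I • (∫ y : ℝ in (0 : ℝ)..w.im, f ((z.re : ℂ) + y * I)) -
          I • (∫ y : ℝ in (0 : ℝ)..w.im, f ((w.re : ℂ) + y * I)) = 0 := by
        refine key0 w.re z.re 0 w.im ?_ ?_
        · refine subset_trans ?_ hr2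
          exact rect_subset_ball him hwre hzre (by simpa using hr0) hwim
        · intro h0
          rcases le_total w.im 0 with h | h
          · rw [min_eq_right h, max_eq_left h] at h0; exact lt_irrefl 0 h0.2
          · rw [min_eq_left h, max_eq_right h] at h0; exact lt_irrefl 0 h0.1
      have hd1 : D1 = (∫ x : ℝ in w.re..z.re, f ((x : ℂ) + w.im * I)) -
          ((z.re - w.re : ℝ) : ℂ) * f w := by
        rw [hD1, intervalIntegral.integral_sub (hhor w.re z.re w.im hwre hzre hwim)
          intervalIntegrable_const, intervalIntegral.integral_const, Complex.real_smul]
      have hd2 : D2 = (∫ y : ℝ in w.im..z.im, f ((z.re : ℂ) + y * I)) -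
          ((z.im - w.im : ℝ) : ℂ) * f w := by
        rw [hD2, intervalIntegral.integral_sub (hvert z.re w.im z.im hzre hwim hzim)
          intervalIntegrable_const, intervalIntegral.integral_const, Complex.real_smul]
      have Cz : z - w = ((z.re - w.re : ℝ) : ℂ) + ((z.im - w.im : ℝ) : ℂ) * I := by
        rw [Complex.ext_iff]
        constructor <;> simp [Complex.sub_re, Complex.sub_im]
      have hFz : F z = (∫ x : ℝ in c.re..z.re, f ((x : ℂ) + (0 : ℝ) * I)) +
          I • ∫ y : ℝ in (0 : ℝ)..z.im, f ((z.re : ℂ) + y * I) := rfl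
      have hFw : F w = (∫ x : ℝ in c.re..w.re, f ((x : ℂ) + (0 : ℝ) * I)) +
          I • ∫ y : ℝ in (0 : ℝ)..w.im, f ((w.re : ℂ) + y * I) := rfl
      rw [hFz, hFw]
      simp only [smul_eq_mul]
      simp only [smul_eq_mul] at E
      linear_combination (-1 : ℂ) * S1 - I * S2 - hd1 - I * hd2 - f w * Cz + E
    rw [hkey]
    -- norm estimates
    have hb1 : ‖D1‖ ≤ ε' / 2 * |z.re - w.re| := by
      rw [hD1]
      refine intervalIntegral.norm_integral_le_of_norm_le_const ?_
      intro x hx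
      have hx' : x ∈ [[w.re, z.re]] := Set.uIoc_subset_uIcc hx
      have hdist : dist ((x : ℂ) + w.im * I) w < δ := by
        rw [Complex.dist_eq]
        calc ‖(x : ℂ) + w.im * I - w‖
            ≤ |((x : ℂ) + w.im * I - w).re| + |((x : ℂ) + w.im * I - w).im| :=
              Complex.norm_le_abs_re_add_abs_im _
          _ = |x - w.re| := by simp
          _ ≤ max |w.re - w.re| |z.re - w.re| := hmem' hx'
          _ = |z.re - w.re| := by simp
          _ ≤ ‖z - w‖ := by rw [← Complex.sub_re]; exact Complex.abs_re_le_norm _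
          _ < δ := by rw [← Complex.dist_eq]; linarith
      have := hδ hdist
      rw [dist_eq_norm] at this
      exact le_of_lt this
    have hb2 : ‖D2‖ ≤ ε' / 2 * |z.im - w.im| := by
      rw [hD2]
      refine intervalIntegral.norm_integral_le_of_norm_le_const ?_
      intro y hy
      have hy' : y ∈ [[w.im, z.im]] := Set.uIoc_subset_uIcc hy
      have hdist : dist ((z.re : ℂ) + y * I) w < δ := by
        rw [Complex.dist_eq]
        calc ‖(z.re : ℂ) + y * I - w‖
            ≤ |((z.re : ℂ) + y * I - w).re| + |((z.re : ℂ) + y * I - w).im| :=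
              Complex.norm_le_abs_re_add_abs_im _
          _ = |z.re - w.re| + |y - w.im| := by simp
          _ ≤ ‖z - w‖ + max |w.im - w.im| |z.im - w.im| := by
              gcongr
              · rw [← Complex.sub_re]; exact Complex.abs_re_le_norm _
              · exact hmem' hy'
          _ = ‖z - w‖ + |z.im - w.im| := by simp
          _ ≤ ‖z - w‖ + ‖z - w‖ := by
              gcongr
              rw [← Complex.sub_im]; exact Complex.abs_im_le_norm _
          _ < δ := by rw [← Complex.dist_eq]; linarith
      have := hδ hdist
      rw [dist_eq_norm] at this
      exact le_of_lt this
    have hre_le : |z.re - w.re| ≤ ‖z - w‖ := by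
      rw [← Complex.sub_re]; exact Complex.abs_re_le_norm _
    have him_le : |z.im - w.im| ≤ ‖z - w‖ := by
      rw [← Complex.sub_im]; exact Complex.abs_im_le_norm _
    calc ‖D1 + I • D2‖ ≤ ‖D1‖ + ‖I • D2‖ := norm_add_le _ _
      _ = ‖D1‖ + ‖D2‖ := by rw [smul_eq_mul, norm_mul, Complex.norm_I, one_mul]
      _ ≤ ε' / 2 * |z.re - w.re| + ε' / 2 * |z.im - w.im| := add_le_add hb1 hb2
      _ ≤ ε' / 2 * ‖z - w‖ + ε' / 2 * ‖z - w‖ := by gcongr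
      _ = ε' * ‖z - w‖ := by ring
  -- conclude: F is holomorphic on the ball, so f = deriv F is differentiable at c
  have hFd : DifferentiableOn ℂ F (ball c r) :=
    fun w hw => ((KD w hw).differentiableAt).differentiableWithinAt
  have hFa : AnalyticOnNhd ℂ F (ball c r) := hFd.analyticOnNhd isOpen_ball
  have hDa : DifferentiableAt ℂ (deriv F) c :=
    ((hFa.deriv) c (mem_ball_self hr0)).differentiableAt
  have heq : deriv F =ᶠ[nhds c] f := by
    filter_upwards [isOpen_ball.mem_nhds (mem_ball_self hr0)] with v hv
    exact (KD v hv).deriv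
  exact ((heq.differentiableAt_iff).mp hDa).differentiableWithinAt

/-- Schwarz reflection gluing: if `Tp` is holomorphic and injective on the upper
half-disc `H⁺`, continuous up to the real interval `I` with `|Tp(x)| = |x|` there,
and `S` is a Schwarz-type function on `Tp(H⁺)` with `S(Tp x) = conj (Tp x)` on `I`,
then `T₋(w) = conj (S (Tp (conj w)))` on the lower half-disc matches `Tp` on `I`
and the glued function extends holomorphically to the whole disc `B(0,ρ)`. -/
theorem reflection_gluing
    (ρ : ℝ) (hρ : 0 < ρ) (Tp S : ℂ → ℂ)
    (hTc : ContinuousOn Tp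
      ({w ∈ Metric.ball (0 : ℂ) ρ | 0 < w.im} ∪ {w : ℂ | w.im = 0 ∧ |w.re| < ρ}))
    (hTh : DifferentiableOn ℂ Tp {w ∈ Metric.ball (0 : ℂ) ρ | 0 < w.im})
    (hTinj : Set.InjOn Tp {w ∈ Metric.ball (0 : ℂ) ρ | 0 < w.im})
    (hTabs : ∀ x : ℂ, x.im = 0 → |x.re| < ρ →
      ‖Tp x‖ = ‖x‖)
    (hSc : ContinuousOn S
      (closure (Tp '' {w ∈ Metric.ball (0 : ℂ) ρ | 0 < w.im})))
    (hSh : DifferentiableOn ℂ S (Tp '' {w ∈ Metric.ball (0 : ℂ) ρ | 0 < w.im}))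
    (hSrefl : ∀ x : ℂ, x.im = 0 → |x.re| < ρ → S (Tp x) = conj (Tp x)) :
    ∃ G : ℂ → ℂ, DifferentiableOn ℂ G (Metric.ball (0 : ℂ) ρ) ∧
      (∀ w ∈ Metric.ball (0 : ℂ) ρ, 0 < w.im → G w = Tp w) ∧
      (∀ w ∈ Metric.ball (0 : ℂ) ρ, w.im < 0 → G w = conj (S (Tp (conj w)))) ∧
      (∀ x : ℂ, x.im = 0 → |x.re| < ρ → G x = Tp x) := by
  have hLsub : ∀ x : ℂ, x.im = 0 → |x.re| < ρ → x ∈ Metric.ball (0 : ℂ) ρ := by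
    intro x h1 h2
    rw [Metric.mem_ball, Complex.dist_eq, sub_zero]
    calc ‖x‖ ≤ |x.re| + |x.im| := Complex.norm_le_abs_re_add_abs_im _
      _ = |x.re| := by rw [h1, abs_zero, add_zero]
      _ < ρ := h2
  have hBL : ∀ w : ℂ, w ∈ Metric.ball (0 : ℂ) ρ → w.im = 0 → |w.re| < ρ := by
    intro w hw h0
    rw [Metric.mem_ball, Complex.dist_eq, sub_zero] at hw
    calc |w.re| ≤ ‖w‖ := Complex.abs_re_le_norm _
      _ < ρ := hw
  have hCB : ∀ w : ℂ, w ∈ Metric.ball (0 : ℂ) ρ → conj w ∈ Metric.ball (0 : ℂ) ρ := by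
    intro w hw
    rw [Metric.mem_ball, Complex.dist_eq, sub_zero] at hw ⊢
    rwa [Complex.norm_conj]
  have hHpopen : IsOpen {w ∈ Metric.ball (0 : ℂ) ρ | 0 < w.im} :=
    Metric.isOpen_ball.inter (isOpen_lt continuous_const Complex.continuous_im)
  -- boundary values of Tp lie in the closure of the image of the upper half-disc
  have hclos : ∀ x : ℂ, x.im = 0 → |x.re| < ρ →
      Tp x ∈ closure (Tp '' {w ∈ Metric.ball (0 : ℂ) ρ | 0 < w.im}) := by
    intro x h1 h2
    have hδ : 0 < ρ - |x.re| := by linarith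
    have hmemPath : ∀ t ∈ Set.Ioo (0 : ℝ) (ρ - |x.re|),
        x + (t : ℂ) * Complex.I ∈ {w ∈ Metric.ball (0 : ℂ) ρ | 0 < w.im} := by
      intro t ht
      refine ⟨?_, ?_⟩
      · rw [Metric.mem_ball, Complex.dist_eq, sub_zero]
        calc ‖x + (t : ℂ) * Complex.I‖
            ≤ |(x + (t : ℂ) * Complex.I).re| + |(x + (t : ℂ) * Complex.I).im| :=
              Complex.norm_le_abs_re_add_abs_im _
          _ = |x.re| + |t| := by simp [h1]
          _ = |x.re| + t := by rw [abs_of_pos ht.1]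
          _ < ρ := by linarith [ht.2]
      · simp [h1, ht.1]
    have hev : ∀ᶠ (t : ℝ) in nhdsWithin (0 : ℝ) (Set.Ioi (0:ℝ)),
        x + (t : ℂ) * Complex.I ∈ {w ∈ Metric.ball (0 : ℂ) ρ | 0 < w.im} := by
      filter_upwards [Ioo_mem_nhdsGT_of_mem ⟨le_refl (0 : ℝ), hδ⟩] with t ht
      exact hmemPath t ht
    have hpath : Filter.Tendsto (fun t : ℝ => x + (t : ℂ) * Complex.I)
        (nhdsWithin (0 : ℝ) (Set.Ioi (0:ℝ))) (nhds x) := by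
      have hcontp : Continuous (fun t : ℝ => x + (t : ℂ) * Complex.I) :=
        continuous_const.add (Complex.continuous_ofReal.mul continuous_const)
      have h0 := hcontp.tendsto (0 : ℝ)
      simp only [Complex.ofReal_zero, zero_mul, add_zero] at h0
      exact h0.mono_left nhdsWithin_le_nhds
    have hcw := hTc x (Or.inr ⟨h1, h2⟩)
    have hT : Filter.Tendsto (fun t : ℝ => Tp (x + (t : ℂ) * Complex.I))
        (nhdsWithin (0 : ℝ) (Set.Ioi (0:ℝ))) (nhds (Tp x)) := by
      refine hcw.tendsto.comp (tendsto_nhdsWithin_iff.mpr ⟨hpath, ?_⟩)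
      exact hev.mono fun t ht => Or.inl ht
    exact mem_closure_of_tendsto hT (hev.mono fun t ht => Set.mem_image_of_mem Tp ht)
  -- the reflected function is continuous on the closed lower half-disc
  have hTmCont : ContinuousOn (fun w => conj (S (Tp (conj w))))
      {w ∈ Metric.ball (0 : ℂ) ρ | w.im ≤ 0} := by
    have hmaps1 : Set.MapsTo (fun w : ℂ => conj w) {w ∈ Metric.ball (0 : ℂ) ρ | w.im ≤ 0}
        ({w ∈ Metric.ball (0 : ℂ) ρ | 0 < w.im} ∪ {w : ℂ | w.im = 0 ∧ |w.re| < ρ}) := by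
      intro w hw
      rcases hw.2.lt_or_eq with hlt | heq
      · exact Or.inl ⟨hCB w hw.1, by rw [Complex.conj_im]; linarith⟩
      · refine Or.inr ⟨by rw [Complex.conj_im, heq, neg_zero], ?_⟩
        rw [Complex.conj_re]
        exact hBL w hw.1 heq
    have h1 : ContinuousOn (fun w : ℂ => Tp (conj w)) {w ∈ Metric.ball (0 : ℂ) ρ | w.im ≤ 0} :=
      hTc.comp Complex.continuous_conj.continuousOn hmaps1
    have hmaps2 : Set.MapsTo (fun w : ℂ => Tp (conj w)) {w ∈ Metric.ball (0 : ℂ) ρ | w.im ≤ 0}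
        (closure (Tp '' {w ∈ Metric.ball (0 : ℂ) ρ | 0 < w.im})) := by
      intro w hw
      rcases hw.2.lt_or_eq with hlt | heq
      · exact subset_closure (Set.mem_image_of_mem Tp
          ⟨hCB w hw.1, by rw [Complex.conj_im]; linarith⟩)
      · have hcx : conj w = w := Complex.conj_eq_iff_im.mpr heq
        show Tp (conj w) ∈ _
        rw [hcx]
        exact hclos w heq (hBL w hw.1 heq)
    have h2 : ContinuousOn (fun w : ℂ => S (Tp (conj w)))
        {w ∈ Metric.ball (0 : ℂ) ρ | w.im ≤ 0} := hSc.comp h1 hmaps2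
    exact Complex.continuous_conj.comp_continuousOn h2
  have hTmEq : ∀ x : ℂ, x.im = 0 → |x.re| < ρ → conj (S (Tp (conj x))) = Tp x := by
    intro x h1 h2
    have hcx : conj x = x := Complex.conj_eq_iff_im.mpr h1
    rw [hcx, hSrefl x h1 h2, Complex.conj_conj]
  refine ⟨fun w => if 0 ≤ w.im then Tp w else conj (S (Tp (conj w))), ?_, ?_, ?_, ?_⟩
  · -- differentiability via the Morera-type lemma
    have hUpC : ContinuousOn (fun w => if 0 ≤ w.im then Tp w else conj (S (Tp (conj w))))
        {w ∈ Metric.ball (0 : ℂ) ρ | 0 ≤ w.im} := by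
      refine ContinuousOn.congr (hTc.mono ?_) ?_
      · intro w hw
        rcases hw.2.lt_or_eq with hlt | heq
        · exact Or.inl ⟨hw.1, hlt⟩
        · exact Or.inr ⟨heq.symm, hBL w hw.1 heq.symm⟩
      · intro w hw
        exact if_pos hw.2
    have hLoC : ContinuousOn (fun w => if 0 ≤ w.im then Tp w else conj (S (Tp (conj w))))
        {w ∈ Metric.ball (0 : ℂ) ρ | w.im ≤ 0} := by
      refine ContinuousOn.congr hTmCont ?_
      intro w hw
      rcases hw.2.lt_or_eq with hlt | heq
      · exact if_neg (not_le.mpr hlt)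
      · show (if 0 ≤ w.im then Tp w else conj (S (Tp (conj w)))) = _
        rw [if_pos (le_of_eq heq.symm)]
        exact (hTmEq w heq (hBL w hw.1 heq)).symm
    have hGc : ContinuousOn (fun w => if 0 ≤ w.im then Tp w else conj (S (Tp (conj w))))
        (Metric.ball (0 : ℂ) ρ) := by
      intro w hw
      have hsub : Metric.ball (0 : ℂ) ρ ⊆
          {w ∈ Metric.ball (0 : ℂ) ρ | 0 ≤ w.im} ∪ {w ∈ Metric.ball (0 : ℂ) ρ | w.im ≤ 0} :=
        fun v hv => (le_total 0 v.im).elim (fun h => Or.inl ⟨hv, h⟩) (fun h => Or.inr ⟨hv, h⟩)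
      refine ContinuousWithinAt.mono (ContinuousWithinAt.union ?_ ?_) hsub
      · rcases le_or_gt 0 w.im with h | h
        · exact hUpC w ⟨hw, h⟩
        · refine continuousWithinAt_of_notMem_closure ?_
          intro hmem
          have hcl : closure {w ∈ Metric.ball (0 : ℂ) ρ | 0 ≤ w.im} ⊆ {v : ℂ | 0 ≤ v.im} :=
            closure_minimal (fun v hv => hv.2) (isClosed_le continuous_const Complex.continuous_im)
          exact absurd (hcl hmem) (not_le.mpr h)
      · rcases le_or_gt w.im 0 with h | h
        · exact hLoC w ⟨hw, h⟩
        · refine continuousWithinAt_of_notMem_closure ?_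
          intro hmem
          have hcl : closure {w ∈ Metric.ball (0 : ℂ) ρ | w.im ≤ 0} ⊆ {v : ℂ | v.im ≤ 0} :=
            closure_minimal (fun v hv => hv.2) (isClosed_le Complex.continuous_im continuous_const)
          exact absurd (hcl hmem) (not_le.mpr h)
    have hGd : ∀ z ∈ Metric.ball (0 : ℂ) ρ, z.im ≠ 0 →
        DifferentiableAt ℂ (fun w => if 0 ≤ w.im then Tp w else conj (S (Tp (conj w)))) z := by
      intro z hz him
      rcases him.lt_or_gt with hneg | hpos
      · have hop : IsOpen {v : ℂ | v.im < 0} := isOpen_lt Complex.continuous_im continuous_const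
        have hev : (fun w => if 0 ≤ w.im then Tp w else conj (S (Tp (conj w)))) =ᶠ[nhds z]
            (fun w => conj (S (Tp (conj w)))) := by
          filter_upwards [hop.mem_nhds hneg] with v hv
          exact if_neg (not_le.mpr hv)
        rw [hev.differentiableAt_iff]
        have hconjz : conj z ∈ {w ∈ Metric.ball (0 : ℂ) ρ | 0 < w.im} :=
          ⟨hCB z hz, by rw [Complex.conj_im]; linarith⟩
        have hST : DifferentiableAt ℂ (fun ζ => S (Tp ζ)) (conj z) := by
          have hDW : DifferentiableWithinAt ℂ (fun ζ => S (Tp ζ))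
              {w ∈ Metric.ball (0 : ℂ) ρ | 0 < w.im} (conj z) :=
            (hSh.comp hTh (Set.mapsTo_image Tp _)) (conj z) hconjz
          exact hDW.differentiableAt (hHpopen.mem_nhds hconjz)
        exact (hasDerivAt_conj_conj hST.hasDerivAt).differentiableAt
      · have hop : IsOpen {v : ℂ | 0 < v.im} := isOpen_lt continuous_const Complex.continuous_im
        have hev : (fun w => if 0 ≤ w.im then Tp w else conj (S (Tp (conj w)))) =ᶠ[nhds z]
            Tp := by
          filter_upwards [hop.mem_nhds hpos] with v hv
          exact if_pos (le_of_lt hv)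
        rw [hev.differentiableAt_iff]
        exact ((hTh z ⟨hz, hpos⟩).differentiableAt (hHpopen.mem_nhds ⟨hz, hpos⟩))
    exact morera_line Metric.isOpen_ball hGc hGd
  · intro w _ hw
    exact if_pos (le_of_lt hw)
  · intro w _ hw
    exact if_neg (not_le.mpr hw)
  · intro x h1 h2
    exact if_pos (le_of_eq h1.symm)
end
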